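/- arXiv:math-ph/0404070 — 4 statements merged into one kernel-verified Lean document; each statement's English description precedes it below -/
import Mathlib

section
/- Let M and 𝒜 be bounded self-adjoint operators on a Hilbert space ℋ with M ≥ δ > 0, and let T : ℋ → H₀ be a bounded operator with T T† = I_{H₀}. For ζ in the upper half-plane (Im ζ > 0), the operator ζM − 𝒜 is invertible, and the admittance 𝔄(ζ) = i T (ζM − 𝒜)^{-1} T† satisfies Re 𝔄(ζ) = (Im ζ) · T (ζM − 𝒜)^{-1} M [T (ζM − 𝒜)^{-1}]† ≥ 0, i.e. 𝔄(ζ) + 𝔄(ζ)† is a non-negative operator. -/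
open ContinuousLinearMap
open scoped InnerProductSpace

/-!
Since `Im ⟪V, (ζM − 𝒜)V⟫ = Im ζ · ⟪V, MV⟫ ≥ δ Im ζ ‖V‖²`, the operator `ζM − 𝒜` is coercive and
hence invertible (Lax–Milgram). For any left inverse `R` of `X` in a star ring,
`R − R* = R (X* − X) R*`; with `X = ζM − 𝒜` the skew part `X* − X = −2i Im ζ · M` turns
`𝔄 + 𝔄† = i T (R − R†) T†` into `2 Im ζ · (TR) M (TR)†`, a congruence of the positive `M`.
-/

theorem sub_star_eq_mul_star_sub_mul_star {A : Type*} [Ring A] [StarRing A] {R X : A}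
    (h : R * X = 1) :
    R - star R = R * (star X - X) * star R := by
  have h' : star X * star R = 1 := by rw [← star_mul, h, star_one]
  rw [mul_sub, sub_mul, mul_assoc, h', mul_one, h, one_mul]

theorem I_smul_sub_star_eq_of_mul_smul_sub_eq_one {A : Type*} [Ring A] [StarRing A]
    [Algebra ℂ A] [StarModule ℂ A] {M 𝒜 R : A} (hM : IsSelfAdjoint M)
    (h𝒜 : IsSelfAdjoint 𝒜) {z : ℂ} (h : R * (z • M - 𝒜) = 1) :
    Complex.I • (R - star R) = ((2 * z.im : ℝ) : ℂ) • (R * M * star R) := by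
  have hskew : star (z • M - 𝒜) - (z • M - 𝒜) = (starRingEnd ℂ z - z) • M := by
    rw [star_sub, star_smul, hM.star_eq, h𝒜.star_eq, sub_smul]
    simp only [Complex.star_def]
    abel
  have hI : Complex.I * (starRingEnd ℂ z - z) = ((2 * z.im : ℝ) : ℂ) := by
    apply Complex.ext <;> simp; ring
  rw [sub_star_eq_mul_star_sub_mul_star h, hskew, mul_smul_comm, smul_mul_assoc, smul_smul, hI]

section Operator

variable {E F : Type*} [NormedAddCommGroup E] [InnerProductSpace ℂ E] [CompleteSpace E]
  [NormedAddCommGroup F] [InnerProductSpace ℂ F] [CompleteSpace F]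

theorem im_inner_smul_sub_apply_self {M 𝒜 : E →L[ℂ] E} (hM : IsSelfAdjoint M)
    (h𝒜 : IsSelfAdjoint 𝒜) (z : ℂ) (V : E) :
    (⟪V, (z • M - 𝒜) V⟫_ℂ).im = z.im * (⟪V, M V⟫_ℂ).re := by
  have hM_real : (⟪V, M V⟫_ℂ).im = 0 := hM.isSymmetric.im_inner_self_apply V
  have h𝒜_real : (⟪V, 𝒜 V⟫_ℂ).im = 0 := h𝒜.isSymmetric.im_inner_self_apply V
  simp only [sub_apply, smul_apply, inner_sub_right, inner_smul_right, Complex.sub_im,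
    Complex.mul_im, hM_real, h𝒜_real]
  ring

theorem isUnit_smul_sub_of_coercive {M 𝒜 : E →L[ℂ] E} (hM : IsSelfAdjoint M)
    (h𝒜 : IsSelfAdjoint 𝒜) {δ : ℝ} (hδ : 0 < δ) (hMδ : ∀ V : E, δ * ‖V‖ ^ 2 ≤ (⟪V, M V⟫_ℂ).re)
    {z : ℂ} (hz : 0 < z.im) : IsUnit (z • M - 𝒜) := by
  refine isUnit_of_forall_le_norm_inner_map _ (c := ⟨δ * z.im, by positivity⟩)
    (mul_pos hδ hz) fun V => ?_
  calc ‖V‖ ^ 2 * (δ * z.im) = z.im * (δ * ‖V‖ ^ 2) := by ring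
    _ ≤ z.im * (⟪V, M V⟫_ℂ).re := by gcongr; exact hMδ V
    _ = (⟪V, (z • M - 𝒜) V⟫_ℂ).im := (im_inner_smul_sub_apply_self hM h𝒜 z V).symm
    _ ≤ ‖⟪V, (z • M - 𝒜) V⟫_ℂ‖ := Complex.im_le_norm _
    _ = ‖⟪(z • M - 𝒜) V, V⟫_ℂ‖ := norm_inner_symm _ _

theorem isPositive_of_coercive {M : E →L[ℂ] E} (hM : IsSelfAdjoint M) {δ : ℝ} (hδ : 0 < δ)
    (hMδ : ∀ V : E, δ * ‖V‖ ^ 2 ≤ (⟪V, M V⟫_ℂ).re) : M.IsPositive := by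
  refine ⟨hM.isSymmetric, fun V => ?_⟩
  rw [reApplyInnerSelf, inner_re_symm]
  exact (by positivity : 0 ≤ δ * ‖V‖ ^ 2).trans (hMδ V)

theorem adjoint_comp_comp_adjoint (T : E →L[ℂ] F) (S : E →L[ℂ] E) :
    adjoint (T ∘L S ∘L adjoint T) = T ∘L adjoint S ∘L adjoint T := by
  rw [adjoint_comp, adjoint_comp, adjoint_adjoint, comp_assoc]

theorem I_smul_add_adjoint (X : F →L[ℂ] F) :
    Complex.I • X + adjoint (Complex.I • X) = Complex.I • (X - adjoint X) := by
  rw [← star_eq_adjoint, star_smul, Complex.star_def, Complex.conj_I, neg_smul, smul_sub,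
    sub_eq_add_neg, star_eq_adjoint]

end Operator

theorem admittance_of_truncated_conservative_is_dissipative_general
    {ℋ H₀ : Type*}
    [NormedAddCommGroup ℋ] [InnerProductSpace ℂ ℋ] [CompleteSpace ℋ]
    [NormedAddCommGroup H₀] [InnerProductSpace ℂ H₀] [CompleteSpace H₀]
    (M 𝒜 : ℋ →L[ℂ] ℋ) (hM : IsSelfAdjoint M) (h𝒜 : IsSelfAdjoint 𝒜)
    (δ : ℝ) (hδ : 0 < δ) (hMδ : ∀ V : ℋ, δ * ‖V‖ ^ 2 ≤ (⟪V, M V⟫_ℂ).re)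
    (T : ℋ →L[ℂ] H₀)
    (ζ : ℂ) (hζ : 0 < ζ.im) :
    ∃ R : ℋ →L[ℂ] ℋ,
      (ζ • M - 𝒜) ∘L R = 1 ∧ R ∘L (ζ • M - 𝒜) = 1 ∧
      (let 𝔄 : H₀ →L[ℂ] H₀ := Complex.I • (T ∘L R ∘L adjoint T);
        (1 / 2 : ℝ) • (𝔄 + adjoint 𝔄)
            = ζ.im • ((T ∘L R) ∘L M ∘L adjoint (T ∘L R)) ∧
        (𝔄 + adjoint 𝔄).IsPositive) := by
  obtain ⟨u, hu⟩ := isUnit_smul_sub_of_coercive hM h𝒜 hδ hMδ hζ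
  set R : ℋ →L[ℂ] ℋ := ↑u⁻¹
  have hRA : R * (ζ • M - 𝒜) = 1 := hu ▸ u.inv_mul
  refine ⟨R, hu ▸ u.mul_inv, hRA, ?_⟩
  intro 𝔄
  have hsum : 𝔄 + adjoint 𝔄 = (2 * ζ.im) • ((T ∘L R) ∘L M ∘L adjoint (T ∘L R)) := by
    calc 𝔄 + adjoint 𝔄
        = Complex.I • (T ∘L R ∘L adjoint T - adjoint (T ∘L R ∘L adjoint T)) :=
          I_smul_add_adjoint _
      _ = T ∘L (Complex.I • (R - star R)) ∘L adjoint T := by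
          rw [adjoint_comp_comp_adjoint, ← star_eq_adjoint, ← comp_sub, ← sub_comp, smul_comp,
            comp_smul]
      _ = _ := by
          rw [I_smul_sub_star_eq_of_mul_smul_sub_eq_one hM h𝒜 hRA, Complex.coe_smul, smul_comp,
            comp_smul, adjoint_comp, star_eq_adjoint, mul_def, mul_def]
          simp only [comp_assoc]
  refine ⟨by rw [hsum, smul_smul, one_div, inv_mul_cancel_left₀ two_ne_zero], ?_⟩
  rw [hsum, ← Complex.coe_smul]
  exact ((isPositive_of_coercive hM hδ hMδ).conj_adjoint (T ∘L R)).smul_of_nonneg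
    (by exact_mod_cast (by positivity : 0 ≤ 2 * ζ.im))

/-- Let `M`, `𝒜` be bounded self-adjoint on `ℋ` with `M ≥ δ > 0`, and
`T : ℋ → H₀` with `T T† = I`. For `Im ζ > 0` the operator `ζM − 𝒜` is invertible and the
admittance `𝔄(ζ) = i T (ζM − 𝒜)⁻¹ T†` satisfies
`Re 𝔄(ζ) = (Im ζ)·T (ζM − 𝒜)⁻¹ M [T (ζM − 𝒜)⁻¹]† ≥ 0`. -/
theorem admittance_of_truncated_conservative_is_dissipative
    {ℋ H₀ : Type*}
    [NormedAddCommGroup ℋ] [InnerProductSpace ℂ ℋ] [CompleteSpace ℋ]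
    [NormedAddCommGroup H₀] [InnerProductSpace ℂ H₀] [CompleteSpace H₀]
    (M 𝒜 : ℋ →L[ℂ] ℋ) (hM : IsSelfAdjoint M) (h𝒜 : IsSelfAdjoint 𝒜)
    (δ : ℝ) (hδ : 0 < δ) (hMδ : ∀ V : ℋ, δ * ‖V‖ ^ 2 ≤ (⟪V, M V⟫_ℂ).re)
    (T : ℋ →L[ℂ] H₀) (hT : T ∘L adjoint T = 1)
    (ζ : ℂ) (hζ : 0 < ζ.im) :
    ∃ R : ℋ →L[ℂ] ℋ,
      (ζ • M - 𝒜) ∘L R = 1 ∧ R ∘L (ζ • M - 𝒜) = 1 ∧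
      (let 𝔄 : H₀ →L[ℂ] H₀ := Complex.I • (T ∘L R ∘L adjoint T);
        (1 / 2 : ℝ) • (𝔄 + adjoint 𝔄)
            = ζ.im • ((T ∘L R) ∘L M ∘L adjoint (T ∘L R)) ∧
        (𝔄 + adjoint 𝔄).IsPositive) :=
  admittance_of_truncated_conservative_is_dissipative_general M 𝒜 hM h𝒜 δ hδ hMδ T ζ hζ
end

section
/- Let Γ : H₁ → H₀ and Ω₁ bounded self-adjoint on H₁, and set G(ζ) = Γ(Ω₁ − ζ)^{-1}Γ† for Im ζ > 0. Then ker G(ζ) = ker G(ζ)† = ker Γ† for every ζ with Im ζ > 0. -/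
open ContinuousLinearMap
open scoped InnerProductSpace

/-! If `(Ω₁ - ζ) w = u` with `Ω₁` self-adjoint, then `Im ⟪u, w⟫ = Im ζ ‖w‖²`. Hence for
`Im ζ ≠ 0` the resolvent `R` satisfies `⟪u, R u⟫ = 0 → u = 0`, and so does `R†` since
`⟪u, R† u⟫` is the conjugate of `⟪u, R u⟫`. For any such `R`, `Γ R Γ† v = 0` gives
`⟪Γ† v, R Γ† v⟫ = ⟪v, Γ R Γ† v⟫ = 0`, so `Γ† v = 0`. -/

theorem LinearMap.IsSymmetric.im_inner_sub_smul_self {E : Type*} [NormedAddCommGroup E]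
    [InnerProductSpace ℂ E] {T : E →ₗ[ℂ] E} (hT : T.IsSymmetric) (ζ : ℂ) (w : E) :
    (⟪T w - ζ • w, w⟫_ℂ).im = ζ.im * ‖w‖ ^ 2 := by
  have hreal : (⟪T w, w⟫_ℂ).im = 0 := hT.im_inner_apply_self w
  rw [inner_sub_left, inner_smul_left, inner_self_eq_norm_sq_to_K, Complex.sub_im, hreal]
  simp [← Complex.ofReal_pow, Complex.mul_im]

theorem eq_zero_of_inner_apply_rightInverse_eq_zero {E : Type*} [NormedAddCommGroup E]
    [InnerProductSpace ℂ E] {Ω R : E →L[ℂ] E} (hΩ : (Ω : E →ₗ[ℂ] E).IsSymmetric) {ζ : ℂ}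
    (hζ : ζ.im ≠ 0) (hR : (Ω - ζ • (1 : E →L[ℂ] E)) ∘L R = 1) {u : E}
    (hu : ⟪u, R u⟫_ℂ = 0) : u = 0 := by
  have hu_eq : Ω (R u) - ζ • R u = u := by
    simpa using congrArg (fun T : E →L[ℂ] E => T u) hR
  have him := hΩ.im_inner_sub_smul_self ζ (R u)
  rw [ContinuousLinearMap.coe_coe, hu_eq, hu, Complex.zero_im, zero_eq_mul] at him
  have hRu : R u = 0 := by simpa [hζ] using him
  rw [← hu_eq, hRu, map_zero, smul_zero, sub_zero]

theorem ker_comp_comp_adjoint_eq_ker_adjoint {H₀ H₁ : Type*}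
    [NormedAddCommGroup H₀] [InnerProductSpace ℂ H₀] [CompleteSpace H₀]
    [NormedAddCommGroup H₁] [InnerProductSpace ℂ H₁] [CompleteSpace H₁]
    (Γ : H₁ →L[ℂ] H₀) {R : H₁ →L[ℂ] H₁} (hR : ∀ u, ⟪u, R u⟫_ℂ = 0 → u = 0) :
    LinearMap.ker (Γ ∘L R ∘L adjoint Γ : H₀ →ₗ[ℂ] H₀) =
      LinearMap.ker (adjoint Γ : H₀ →ₗ[ℂ] H₁) := by
  ext v
  simp only [LinearMap.mem_ker, ContinuousLinearMap.coe_coe, comp_apply]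
  refine ⟨fun hv => hR _ ?_, fun hv => by rw [hv, map_zero, map_zero]⟩
  rw [adjoint_inner_left, hv, inner_zero_right]

theorem kernel_of_herglotz_function_eq_kernel_adjoint_general
    {H₀ H₁ : Type*}
    [NormedAddCommGroup H₀] [InnerProductSpace ℂ H₀] [CompleteSpace H₀]
    [NormedAddCommGroup H₁] [InnerProductSpace ℂ H₁] [CompleteSpace H₁]
    (Ω₁ : H₁ →L[ℂ] H₁) (hΩ : IsSelfAdjoint Ω₁) (Γ : H₁ →L[ℂ] H₀)
    (ζ : ℂ) (hζ : 0 < ζ.im)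
    (R : H₁ →L[ℂ] H₁)
    (hR1 : (Ω₁ - ζ • (1 : H₁ →L[ℂ] H₁)) ∘L R = 1) :
    LinearMap.ker (Γ ∘L R ∘L adjoint Γ : H₀ →ₗ[ℂ] H₀) = LinearMap.ker (adjoint Γ : H₀ →ₗ[ℂ] H₁) ∧
    LinearMap.ker (adjoint (Γ ∘L R ∘L adjoint Γ) : H₀ →ₗ[ℂ] H₀) = LinearMap.ker (adjoint Γ : H₀ →ₗ[ℂ] H₁) := by
  have hR : ∀ u, ⟪u, R u⟫_ℂ = 0 → u = 0 := fun u =>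
    eq_zero_of_inner_apply_rightInverse_eq_zero hΩ.isSymmetric hζ.ne' hR1
  have hR_adjoint : ∀ u, ⟪u, adjoint R u⟫_ℂ = 0 → u = 0 := fun u hu =>
    hR u (inner_eq_zero_symm.mp (by rwa [← adjoint_inner_right]))
  have hG_adjoint : adjoint (Γ ∘L R ∘L adjoint Γ) = Γ ∘L adjoint R ∘L adjoint Γ := by
    rw [adjoint_comp, adjoint_comp, adjoint_adjoint, comp_assoc]
  rw [hG_adjoint]
  exact ⟨ker_comp_comp_adjoint_eq_ker_adjoint Γ hR, ker_comp_comp_adjoint_eq_ker_adjoint Γ hR_adjoint⟩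

/-- For `G(ζ) = Γ(Ω₁ − ζ)⁻¹Γ†` with `Ω₁` bounded self-adjoint and
`Im ζ > 0`, one has `ker G(ζ) = ker G(ζ)† = ker Γ†`. -/
theorem kernel_of_herglotz_function_eq_kernel_adjoint
    {H₀ H₁ : Type*}
    [NormedAddCommGroup H₀] [InnerProductSpace ℂ H₀] [CompleteSpace H₀]
    [NormedAddCommGroup H₁] [InnerProductSpace ℂ H₁] [CompleteSpace H₁]
    (Ω₁ : H₁ →L[ℂ] H₁) (hΩ : IsSelfAdjoint Ω₁) (Γ : H₁ →L[ℂ] H₀)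
    (ζ : ℂ) (hζ : 0 < ζ.im)
    (R : H₁ →L[ℂ] H₁)
    (hR1 : (Ω₁ - ζ • (1 : H₁ →L[ℂ] H₁)) ∘L R = 1)
    (hR2 : R ∘L (Ω₁ - ζ • (1 : H₁ →L[ℂ] H₁)) = 1) :
    LinearMap.ker (Γ ∘L R ∘L adjoint Γ : H₀ →ₗ[ℂ] H₀) = LinearMap.ker (adjoint Γ : H₀ →ₗ[ℂ] H₁) ∧
    LinearMap.ker (adjoint (Γ ∘L R ∘L adjoint Γ) : H₀ →ₗ[ℂ] H₀) = LinearMap.ker (adjoint Γ : H₀ →ₗ[ℂ] H₁) :=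
  kernel_of_herglotz_function_eq_kernel_adjoint_general Ω₁ hΩ Γ ζ hζ R hR1
end

section
/- Let α_∞ ≥ 0 be a bounded operator on H₀, H₁ = L²(ℝ, H₀), Ω₁ multiplication by the independent variable (self-adjoint, unbounded), and S : H₁ → H₀ the bounded operator Sψ = (1/√π) ∫ (x + i)^{-1} √α_∞ ψ(x) dx. Then S e^{-itΩ₁} S† = e^{-|t|} α_∞ for all t ∈ ℝ, where S† v = (1/√π)(x − i)^{-1}√α_∞ v. -/
/-!
Writing `S ψ = ∫ k x • √α (ψ x)` with the kernel `k x = π^{-1/2} (x + i)⁻¹ ∈ L²(ℝ)`, the adjoint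
is `S† v = conj k • √α v`, hence `S e^{-itΩ₁} S† = (∫ e^{-itx} |k x|²) • √α √α`. The remaining
scalar integral `(1/π) ∫ e^{-itx} / (1 + x²) = e^{-|t|}` is Fourier inversion for `e^{-|x|}`,
whose Fourier transform `2 / (1 + (2πξ)²)` is computed separately on the two half-lines.
-/

open MeasureTheory Set ContinuousLinearMap
open scoped FourierTransform InnerProductSpace ComplexConjugate

lemma integrable_exp_neg_abs : Integrable fun x : ℝ => Real.exp (-|x|) := by
  rw [← integrableOn_univ, ← Iic_union_Ioi (a := (0 : ℝ)), integrableOn_union]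
  constructor
  · refine (integrableOn_exp_mul_Iic one_pos 0).congr_fun (fun x hx => ?_) measurableSet_Iic
    simp [abs_of_nonpos (mem_Iic.mp hx)]
  · refine (integrableOn_exp_mul_Ioi neg_one_lt_zero 0).congr_fun (fun x hx => ?_)
      measurableSet_Ioi
    simp [abs_of_pos (mem_Ioi.mp hx)]

lemma fourier_exp_neg_abs (ξ : ℝ) :
    𝓕 (fun x : ℝ => (Real.exp (-|x|) : ℂ)) ξ = ((2 / (1 + (2 * Real.pi * ξ) ^ 2) : ℝ) : ℂ) := by
  set a : ℂ := 2 * Real.pi * ξ * Complex.I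
  set f : ℝ → ℂ := fun v =>
    Complex.exp (↑(-2 * Real.pi * v * ξ) * Complex.I) • (Real.exp (-|v|) : ℂ)
  have hleft : EqOn f (fun v : ℝ => Complex.exp ((1 - a) * v)) (Iic 0) := fun v hv => by
    simp only [f, smul_eq_mul, abs_of_nonpos (mem_Iic.mp hv), Complex.ofReal_exp, ← Complex.exp_add]
    congr 1
    push_cast
    ring
  have hright : EqOn f (fun v : ℝ => Complex.exp (-(1 + a) * v)) (Ioi 0) := fun v hv => by
    simp only [f, smul_eq_mul, abs_of_pos (mem_Ioi.mp hv), Complex.ofReal_exp, ← Complex.exp_add]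
    congr 1
    push_cast
    ring
  have hre_left : 0 < (1 - a).re := by simp [a]
  have hre_right : (-(1 + a)).re < 0 := by simp [a]
  rw [Real.fourier_real_eq_integral_exp_smul, ← intervalIntegral.integral_Iic_add_Ioi
    ((integrableOn_exp_mul_complex_Iic hre_left 0).congr_fun hleft.symm measurableSet_Iic)
    ((integrableOn_exp_mul_complex_Ioi hre_right 0).congr_fun hright.symm measurableSet_Ioi),
    setIntegral_congr_fun measurableSet_Iic hleft, setIntegral_congr_fun measurableSet_Ioi hright,
    integral_exp_mul_complex_Iic hre_left, integral_exp_mul_complex_Ioi hre_right]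
  have h1 : 1 - a ≠ 0 := fun h => by simpa [a] using congrArg Complex.re h
  have h2 : 1 + a ≠ 0 := fun h => by simpa [a] using congrArg Complex.re h
  have hden : ((1 + (2 * Real.pi * ξ) ^ 2 : ℝ) : ℂ) = (1 - a) * (1 + a) := by
    push_cast [a]
    ring_nf
    rw [Complex.I_sq]
    ring
  rw [Complex.ofReal_div, hden]
  simp only [Complex.ofReal_zero, mul_zero, Complex.exp_zero, Complex.ofReal_ofNat]
  field_simp
  ring

lemma integral_exp_mul_inv_one_add_sq (t : ℝ) :
    ∫ x : ℝ, Complex.exp (-Complex.I * t * x) * ((1 + x ^ 2)⁻¹ : ℝ) =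
      ((Real.pi * Real.exp (-|t|) : ℝ) : ℂ) := by
  set g : ℝ → ℂ := fun x => (Real.exp (-|x|) : ℂ)
  have hFg : 𝓕 g = fun ξ => ((2 / (1 + (2 * Real.pi * ξ) ^ 2) : ℝ) : ℂ) :=
    funext fourier_exp_neg_abs
  have hFg_int : Integrable (𝓕 g) := by
    rw [hFg]
    refine Integrable.ofReal (𝕜 := ℂ) (f := fun ξ : ℝ => 2 / (1 + (2 * Real.pi * ξ) ^ 2)) ?_
    convert (integrable_inv_one_add_sq.const_mul 2).comp_mul_left'
      (by positivity : 2 * Real.pi ≠ 0) using 2 with ξ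
    rw [div_eq_mul_inv]
  have hinv : 𝓕⁻ (𝓕 g) = g := (by fun_prop : Continuous g).fourierInv_fourier_eq
    integrable_exp_neg_abs.ofReal hFg_int
  set G : ℝ → ℂ := fun x => Complex.exp (-Complex.I * t * x) * ((1 + x ^ 2)⁻¹ : ℝ)
  have h2π : (0 : ℝ) < 2 * Real.pi := by positivity
  calc ∫ x, G x
      = Real.pi * (2 * ((2 * Real.pi)⁻¹ • ∫ x, G x)) := by
        rw [Complex.real_smul]; push_cast; field_simp
    _ = Real.pi * 𝓕 (𝓕 g) t := by
        rw [Real.fourier_real_eq_integral_exp_smul, hFg, ← abs_of_pos (inv_pos.mpr h2π),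
          ← Measure.integral_comp_mul_left, ← integral_const_mul]
        congr 2 with v
        simp only [G, smul_eq_mul]
        push_cast
        ring_nf
    _ = ((Real.pi * Real.exp (-|t|) : ℝ) : ℂ) := by
        rw [← neg_neg t, ← Real.fourierInv_eq_fourier_neg, hinv]
        simp [g]

lemma norm_inv_ofReal_add_I_sq (x : ℝ) : ‖((x : ℂ) + Complex.I)⁻¹‖ ^ 2 = (1 + x ^ 2)⁻¹ := by
  rw [norm_inv, inv_pow, Complex.sq_norm, Complex.normSq_apply]
  simp only [Complex.add_re, Complex.ofReal_re, Complex.I_re, add_zero, Complex.add_im,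
    Complex.ofReal_im, Complex.I_im, zero_add, mul_one, inv_inj]
  ring

lemma memLp_inv_ofReal_add_I : MemLp (fun x : ℝ => ((x : ℂ) + Complex.I)⁻¹) 2 := by
  have hcont : Continuous fun x : ℝ => ((x : ℂ) + Complex.I)⁻¹ :=
    Continuous.inv₀ (by fun_prop) fun x h => by simpa using congrArg Complex.im h
  rw [memLp_two_iff_integrable_sq_norm hcont.aestronglyMeasurable]
  simpa only [norm_inv_ofReal_add_I_sq] using integrable_inv_one_add_sq

section IntegralOperator

variable {α : Type*} [MeasurableSpace α] {μ : Measure α}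
  {H : Type*} [NormedAddCommGroup H] [InnerProductSpace ℂ H] [CompleteSpace H]
  {T : Lp H 2 μ →L[ℂ] H} {A : H →L[ℂ] H} {k : α → ℂ}

lemma adjoint_apply_ae_eq_of_eq_integral (hk : MemLp k 2 μ)
    (hT : ∀ ψ : Lp H 2 μ, T ψ = ∫ x, k x • A (ψ x) ∂μ) (v : H) :
    (adjoint T v : α → H) =ᵐ[μ] fun x => conj (k x) • adjoint A v := by
  have hmem : MemLp (fun x => conj (k x) • adjoint A v) 2 μ :=
    (memLp_top_const (adjoint A v)).smul hk.star
  suffices adjoint T v = hmem.toLp _ from this ▸ hmem.coeFn_toLp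
  refine ext_inner_right ℂ fun φ => ?_
  have hint : Integrable (fun x => k x • A (φ x)) μ :=
    memLp_one_iff_integrable.mp ((A.comp_memLp' (Lp.memLp φ)).smul hk)
  rw [adjoint_inner_left, hT, ← integral_inner hint, L2.inner_def]
  refine integral_congr_ae ?_
  filter_upwards [hmem.coeFn_toLp] with x hx
  rw [hx, inner_smul_right, inner_smul_left, ← adjoint_inner_left, Complex.conj_conj]

theorem comp_comp_adjoint_eq_of_eq_integral (hk : MemLp k 2 μ)
    (hT : ∀ ψ : Lp H 2 μ, T ψ = ∫ x, k x • A (ψ x) ∂μ)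
    {M : Lp H 2 μ →L[ℂ] Lp H 2 μ} {m : α → ℂ}
    (hM : ∀ ψ : Lp H 2 μ, (M ψ : α → H) =ᵐ[μ] fun x => m x • ψ x) :
    T ∘L M ∘L adjoint T = (∫ x, m x * (‖k x‖ : ℂ) ^ 2 ∂μ) • (A ∘L adjoint A) := by
  ext v
  rw [comp_apply, comp_apply, hT, smul_apply, comp_apply, ← integral_smul_const]
  refine integral_congr_ae ?_
  filter_upwards [hM (adjoint T v), adjoint_apply_ae_eq_of_eq_integral hk hT v] with x hMx hx
  rw [hMx, hx, map_smul, map_smul, smul_smul, smul_smul, ← Complex.mul_conj']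
  congr 1
  ring

end IntegralOperator

theorem instantaneous_friction_model_general
    {H₀ : Type*} [NormedAddCommGroup H₀] [InnerProductSpace ℂ H₀] [CompleteSpace H₀]
    (α sqrtα : H₀ →L[ℂ] H₀)
    (hsqrtα : sqrtα.IsPositive) (hsq : sqrtα ∘L sqrtα = α)
    (S : Lp H₀ 2 (volume : Measure ℝ) →L[ℂ] H₀)
    (hS : ∀ ψ : Lp H₀ 2 (volume : Measure ℝ),
      S ψ = ((Real.sqrt Real.pi : ℂ))⁻¹ •
        ∫ x : ℝ, (((x : ℂ) + Complex.I)⁻¹) • sqrtα (ψ x))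
    (U : ℝ → (Lp H₀ 2 (volume : Measure ℝ) →L[ℂ] Lp H₀ 2 (volume : Measure ℝ)))
    (hU : ∀ (t : ℝ) (ψ : Lp H₀ 2 (volume : Measure ℝ)),
      (U t ψ : ℝ → H₀) =ᵐ[volume]
        fun x : ℝ => Complex.exp (-Complex.I * t * x) • (ψ x)) :
    ∀ t : ℝ, S ∘L U t ∘L adjoint S = Real.exp (-|t|) • α := by
  intro t
  have hS_kernel : ∀ ψ, S ψ = ∫ x : ℝ,
      ((Real.sqrt Real.pi : ℂ)⁻¹ * ((x : ℂ) + Complex.I)⁻¹) • sqrtα (ψ x) := fun ψ => by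
    simp only [hS, mul_smul, integral_smul]
  have hk_sq : ∀ x : ℝ, (‖(Real.sqrt Real.pi : ℂ)⁻¹ * ((x : ℂ) + Complex.I)⁻¹‖ : ℂ) ^ 2 =
      (Real.pi : ℂ)⁻¹ * ((1 + x ^ 2)⁻¹ : ℝ) := fun x => by
    have : ‖(Real.sqrt Real.pi : ℂ)⁻¹ * ((x : ℂ) + Complex.I)⁻¹‖ ^ 2 =
        Real.pi⁻¹ * (1 + x ^ 2)⁻¹ := by
      rw [norm_mul, mul_pow, norm_inv_ofReal_add_I_sq, norm_inv, inv_pow, Complex.norm_real,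
        Real.norm_eq_abs, sq_abs, Real.sq_sqrt Real.pi_pos.le]
    exact_mod_cast this
  rw [comp_comp_adjoint_eq_of_eq_integral (memLp_inv_ofReal_add_I.const_mul _) hS_kernel (hU t),
    isSelfAdjoint_iff'.mp hsqrtα.isSelfAdjoint, hsq]
  simp_rw [hk_sq, mul_left_comm _ (Real.pi : ℂ)⁻¹]
  rw [integral_const_mul, integral_exp_mul_inv_one_add_sq, Complex.ofReal_mul, inv_mul_cancel_left₀ (Complex.ofReal_ne_zero.mpr Real.pi_ne_zero),
    Complex.coe_smul]

/-- Let `α_∞ ≥ 0` be bounded on `H₀`, `H₁ = L²(ℝ, H₀)`, `Ω₁`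
multiplication by the independent variable, and `S : H₁ → H₀` the bounded operator
`Sψ = (1/√π) ∫ (x+i)⁻¹ √α_∞ ψ(x) dx`.  Then `S e^{-itΩ₁} S† = e^{-|t|} α_∞` for all `t`,
where `e^{-itΩ₁}` is multiplication by `e^{-itx}`. -/
theorem instantaneous_friction_model
    {H₀ : Type*} [NormedAddCommGroup H₀] [InnerProductSpace ℂ H₀] [CompleteSpace H₀]
    (α sqrtα : H₀ →L[ℂ] H₀) (hα : α.IsPositive)
    (hsqrtα : sqrtα.IsPositive) (hsq : sqrtα ∘L sqrtα = α)
    (S : Lp H₀ 2 (volume : Measure ℝ) →L[ℂ] H₀)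
    (hS : ∀ ψ : Lp H₀ 2 (volume : Measure ℝ),
      S ψ = ((Real.sqrt Real.pi : ℂ))⁻¹ •
        ∫ x : ℝ, (((x : ℂ) + Complex.I)⁻¹) • sqrtα (ψ x))
    (U : ℝ → (Lp H₀ 2 (volume : Measure ℝ) →L[ℂ] Lp H₀ 2 (volume : Measure ℝ)))
    (hU : ∀ (t : ℝ) (ψ : Lp H₀ 2 (volume : Measure ℝ)),
      (U t ψ : ℝ → H₀) =ᵐ[volume]
        fun x : ℝ => Complex.exp (-Complex.I * t * x) • (ψ x)) :
    ∀ t : ℝ, S ∘L U t ∘L adjoint S = Real.exp (-|t|) • α :=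
  instantaneous_friction_model_general α sqrtα hsqrtα hsq S hS U hU
end

section
/- (Stieltjes inversion, weak form) Let N be a finite non-negative Borel measure on ℝ and g(ζ) = ∫ dN(σ)/(σ − ζ). Then for every continuous compactly supported f : ℝ → ℝ, lim_{η→0⁺} (1/π) ∫_{-∞}^∞ f(σ) Im g(σ + iη) dσ = ∫ f dN. -/
open MeasureTheory Filter Complex
open scoped Topology

/-!
Since `Im (x - (σ + iη))⁻¹ = η / ((x - σ)² + η²)`, Fubini turns `∫ f(σ) Im g(σ + iη) dσ` into
`∫ S f η dN`, where `S f η x = ∫ f(x + ηt) / (1 + t²) dt` comes from substituting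
`σ = x + ηt`. After this substitution the integrand is dominated by `sup |f| / (1 + t²)` uniformly
in `(η, x)`, so `S f` is jointly continuous up to and including `η = 0`, where `S f 0 = π f`;
dominated convergence against the finite measure `N` concludes.
-/

/-- `π` times the Poisson kernel of the upper half-plane. -/
noncomputable def halfPlanePoissonKernel (η x : ℝ) : ℝ := η / (x ^ 2 + η ^ 2)

/-- `π` times the Poisson integral of `f` at `x + iη` (see `integral_mul_halfPlanePoissonKernel`);
unlike the Poisson integral itself, it makes sense at `η = 0`. -/
noncomputable def cauchySmoothing (f : ℝ → ℝ) (η x : ℝ) : ℝ :=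
  ∫ t, f (x + η * t) * (1 + t ^ 2)⁻¹

section Kernel

variable {η : ℝ}

lemma halfPlanePoissonKernel_nonneg (hη : 0 ≤ η) (x : ℝ) : 0 ≤ halfPlanePoissonKernel η x := by
  unfold halfPlanePoissonKernel; positivity

lemma halfPlanePoissonKernel_le_inv (hη : 0 < η) (x : ℝ) : halfPlanePoissonKernel η x ≤ η⁻¹ := by
  rw [halfPlanePoissonKernel, div_le_iff₀ (by positivity), inv_mul_eq_div, le_div_iff₀ hη]
  nlinarith [sq_nonneg x]

lemma continuous_halfPlanePoissonKernel (hη : η ≠ 0) : Continuous (halfPlanePoissonKernel η) :=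
  continuous_const.div (by fun_prop) fun x => by positivity

lemma im_inv_ofReal_sub_ofReal_add_mul_I (x σ η : ℝ) :
    ((x : ℂ) - (σ + η * I))⁻¹.im = halfPlanePoissonKernel η (x - σ) := by
  rw [inv_im, halfPlanePoissonKernel]
  simp only [sub_im, ofReal_im, add_im, mul_im, ofReal_re, I_im, mul_one, I_re, mul_zero,
    add_zero, zero_add, zero_sub, neg_neg, normSq_apply, sub_re, add_re, mul_re, sub_self, mul_neg,
    neg_mul]
  ring

lemma integrable_inv_ofReal_sub (μ : Measure ℝ) [IsFiniteMeasure μ] {ζ : ℂ} (hζ : ζ.im ≠ 0) :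
    Integrable (fun x : ℝ => ((x : ℂ) - ζ)⁻¹) μ := by
  have hne : ∀ x : ℝ, (x : ℂ) - ζ ≠ 0 := fun x h => hζ (by simpa using congrArg im h)
  refine (integrable_const |ζ.im|⁻¹).mono'
    ((continuous_ofReal.sub continuous_const).inv₀ hne).aestronglyMeasurable
    (Eventually.of_forall fun x => ?_)
  rw [norm_inv]
  refine inv_anti₀ (abs_pos.2 hζ) ?_
  simpa using abs_im_le_norm ((x : ℂ) - ζ)

lemma im_integral_inv_ofReal_sub (μ : Measure ℝ) [IsFiniteMeasure μ] (σ : ℝ) (hη : η ≠ 0) :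
    (∫ x, ((x : ℂ) - (σ + η * I))⁻¹ ∂μ).im = ∫ x, halfPlanePoissonKernel η (x - σ) ∂μ := by
  simp_rw [← im_inv_ofReal_sub_ofReal_add_mul_I]
  exact (integral_im (integrable_inv_ofReal_sub μ (by simpa using hη))).symm

end Kernel

section Smoothing

variable {f : ℝ → ℝ} {C : ℝ}

lemma integral_mul_halfPlanePoissonKernel {η : ℝ} (hη : 0 < η) (x : ℝ) :
    ∫ σ, f σ * halfPlanePoissonKernel η (x - σ) = cauchySmoothing f η x := by
  set F : ℝ → ℝ := fun σ => f σ * halfPlanePoissonKernel η (x - σ)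
  have hF : ∀ t, F (x + η * t) = η⁻¹ * (f (x + η * t) * (1 + t ^ 2)⁻¹) := fun t => by
    simp only [F, halfPlanePoissonKernel]
    field_simp
    ring
  have hsub : ∫ t, F (x + η * t) = η⁻¹ * ∫ σ, F σ := by
    rw [Measure.integral_comp_mul_left (fun y => F (x + y)), integral_add_left_eq_self,
      abs_of_pos (inv_pos.2 hη), smul_eq_mul]
  simp_rw [hF, integral_const_mul] at hsub
  rw [cauchySmoothing, mul_left_cancel₀ (inv_ne_zero hη.ne') hsub]

lemma cauchySmoothing_zero (f : ℝ → ℝ) (x : ℝ) : cauchySmoothing f 0 x = Real.pi * f x := by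
  simp [cauchySmoothing, integral_const_mul, integral_univ_inv_one_add_sq, mul_comm]

lemma norm_integrand_cauchySmoothing_le (hC : ∀ x, ‖f x‖ ≤ C) (η x t : ℝ) :
    ‖f (x + η * t) * (1 + t ^ 2)⁻¹‖ ≤ C * (1 + t ^ 2)⁻¹ := by
  have ht : 0 ≤ (1 + t ^ 2)⁻¹ := by positivity
  rw [norm_mul, Real.norm_of_nonneg ht]
  exact mul_le_mul_of_nonneg_right (hC _) ht

lemma norm_cauchySmoothing_le (hC : ∀ x, ‖f x‖ ≤ C) (η x : ℝ) :
    ‖cauchySmoothing f η x‖ ≤ C * Real.pi := by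
  calc ‖cauchySmoothing f η x‖ ≤ ∫ t, C * (1 + t ^ 2)⁻¹ :=
        norm_integral_le_of_norm_le (integrable_inv_one_add_sq.const_mul C)
          (Eventually.of_forall (norm_integrand_cauchySmoothing_le hC η x))
    _ = C * Real.pi := by rw [integral_const_mul, integral_univ_inv_one_add_sq]

lemma continuous_cauchySmoothing (hf : Continuous f) (hC : ∀ x, ‖f x‖ ≤ C) :
    Continuous fun p : ℝ × ℝ => cauchySmoothing f p.1 p.2 :=
  continuous_of_dominated (fun p => by fun_prop (disch := positivity))
    (fun p => Eventually.of_forall (norm_integrand_cauchySmoothing_le hC p.1 p.2))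
    (integrable_inv_one_add_sq.const_mul C) (Eventually.of_forall fun t => by
      fun_prop (disch := positivity))

lemma continuous_integral_cauchySmoothing (μ : Measure ℝ) [IsFiniteMeasure μ]
    (hf : Continuous f) (hC : ∀ x, ‖f x‖ ≤ C) :
    Continuous fun η => ∫ x, cauchySmoothing f η x ∂μ := by
  have hS := continuous_cauchySmoothing hf hC
  exact continuous_of_dominated
    (fun η => (hS.comp (Continuous.prodMk_right η)).aestronglyMeasurable)
    (fun η => Eventually.of_forall (norm_cauchySmoothing_le hC η)) (integrable_const _)
    (Eventually.of_forall fun x => hS.comp (Continuous.prodMk_left x))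

end Smoothing

lemma integral_mul_integral_halfPlanePoissonKernel (μ : Measure ℝ) [IsFiniteMeasure μ]
    {f : ℝ → ℝ} (hf : Integrable f) {η : ℝ} (hη : 0 < η) :
    ∫ σ, f σ * ∫ x, halfPlanePoissonKernel η (x - σ) ∂μ = ∫ x, cauchySmoothing f η x ∂μ := by
  have hP := continuous_halfPlanePoissonKernel hη.ne'
  have hint : Integrable (Function.uncurry fun σ x => f σ * halfPlanePoissonKernel η (x - σ))
      (volume.prod μ) := by
    refine (hf.norm.mul_prod (integrable_const η⁻¹)).mono'
      (hf.aestronglyMeasurable.comp_fst.mul (hP.comp (by fun_prop)).aestronglyMeasurable)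
      (Eventually.of_forall fun ⟨σ, x⟩ => ?_)
    rw [Function.uncurry_apply_pair, norm_mul,
      Real.norm_of_nonneg (halfPlanePoissonKernel_nonneg hη.le _)]
    exact mul_le_mul_of_nonneg_left (halfPlanePoissonKernel_le_inv hη _) (norm_nonneg _)
  simp_rw [← integral_const_mul]
  rw [integral_integral_swap hint]
  simp_rw [integral_mul_halfPlanePoissonKernel hη]

/-- (Stieltjes inversion, weak form.) For a finite non-negative Borel
measure `N` on `ℝ` and `g(ζ) = ∫ (σ − ζ)⁻¹ dN(σ)`, for every continuous compactly
supported `f : ℝ → ℝ`,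
`lim_{η→0⁺} (1/π) ∫ f(σ) Im g(σ+iη) dσ = ∫ f dN`. -/
theorem stieltjes_inversion_weak
    (N : Measure ℝ) [IsFiniteMeasure N]
    (g : ℂ → ℂ) (hg : ∀ ζ : ℂ, g ζ = ∫ σ : ℝ, ((σ : ℂ) - ζ)⁻¹ ∂N)
    (f : ℝ → ℝ) (hf : Continuous f) (hfc : HasCompactSupport f) :
    Tendsto
      (fun η : ℝ => (1 / Real.pi) *
        ∫ σ : ℝ, f σ * (g ((σ : ℂ) + (η : ℂ) * Complex.I)).im)
      (nhdsWithin 0 (Set.Ioi 0))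
      (𝓝 (∫ σ : ℝ, f σ ∂N)) := by
  obtain ⟨C, hC⟩ := hfc.exists_bound_of_continuous hf
  have h_eq : ∀ η : ℝ, 0 < η →
      ∫ σ : ℝ, f σ * (g (σ + η * I)).im = ∫ x, cauchySmoothing f η x ∂N :=
    fun η hη => by
      simp_rw [hg, im_integral_inv_ofReal_sub N _ hη.ne']
      exact integral_mul_integral_halfPlanePoissonKernel N
        (hf.integrable_of_hasCompactSupport hfc) hη
  have h_lim : Tendsto (fun η => ∫ x, cauchySmoothing f η x ∂N) (𝓝[>] 0)
      (𝓝 (Real.pi * ∫ x, f x ∂N)) := by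
    have := ((continuous_integral_cauchySmoothing N hf hC).tendsto 0).mono_left
      (nhdsWithin_le_nhds (s := Set.Ioi 0))
    simpa only [cauchySmoothing_zero, integral_const_mul] using this
  have h_pi : (1 / Real.pi) * (Real.pi * ∫ x, f x ∂N) = ∫ x, f x ∂N := by
    field_simp [Real.pi_ne_zero]
  rw [← h_pi]
  refine (h_lim.const_mul _).congr' ?_
  filter_upwards [self_mem_nhdsWithin] with η hη
  rw [h_eq η hη]
end
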